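/- Let d be a positive integer, let p_c ∈ (0, 1/2] and let p ∈ (1/(2d), p_c). If q ∈ [0,1] satisfies q ≥ 8d²(p_c - p), then r := p + (1 - (1-q)^(1/(2d)))·p·(1-p) > p_c. -/

import Mathlib

/-!
Bernoulli's inequality for a fractional exponent α = 1/(2d) gives
1 - (1 - q)^α ≥ α q, so the increment of r over p is at least α q p (1 - p).
Since p > α and 1 - p ≥ 1/2, this exceeds α² q / 2 = q / (8 d²) ≥ p_c - p.
-/

lemma mul_le_one_sub_one_sub_rpow {α q : ℝ} (hα0 : 0 ≤ α) (hα1 : α ≤ 1) (hq : q ≤ 1) :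
    α * q ≤ 1 - (1 - q) ^ α := by
  have h := rpow_one_add_le_one_add_mul_self (s := -q) (by linarith) hα0 hα1
  rw [← sub_eq_add_neg] at h
  linarith

lemma sq_mul_div_two_lt_one_sub_one_sub_rpow_mul {α p q : ℝ} (hα0 : 0 < α) (hα1 : α ≤ 1)
    (hαp : α < p) (hp : p ≤ 1 / 2) (hq0 : 0 < q) (hq1 : q ≤ 1) :
    α ^ 2 * q / 2 < (1 - (1 - q) ^ α) * p * (1 - p) := by
  have hαq : 0 < α * q := mul_pos hα0 hq0
  have hvariance : α * (1 / 2) < p * (1 - p) := by nlinarith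
  calc α ^ 2 * q / 2 = α * q * (α * (1 / 2)) := by ring
    _ < α * q * (p * (1 - p)) := mul_lt_mul_of_pos_left hvariance hαq
    _ ≤ (1 - (1 - q) ^ α) * (p * (1 - p)) := by
        gcongr
        · nlinarith
        · exact mul_le_one_sub_one_sub_rpow hα0.le hα1 hq1
    _ = (1 - (1 - q) ^ α) * p * (1 - p) := by ring

theorem key_arithmetic_estimate_general (d : ℕ) (hd : 0 < d) (p_c p q : ℝ)
    (hpc1 : p_c ≤ 1 / 2)
    (hp1 : 1 / (2 * d) < p) (hp2 : p < p_c)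
    (hq1 : q ≤ 1)
    (hq : q ≥ 8 * d ^ 2 * (p_c - p)) :
    p + (1 - (1 - q) ^ ((1 : ℝ) / (2 * d))) * p * (1 - p) > p_c := by
  have hd1 : (1 : ℝ) ≤ d := by exact_mod_cast hd
  have hα0 : (0 : ℝ) < 1 / (2 * d) := by positivity
  have hα1 : (1 : ℝ) / (2 * d) ≤ 1 := by rw [div_le_one (by positivity)]; linarith
  have hq0 : 0 < q := lt_of_lt_of_le (by have := sub_pos.mpr hp2; positivity) hq
  have hgap : p_c - p ≤ (1 / (2 * d)) ^ 2 * q / 2 := by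
    have hα_sq : (1 / (2 * (d : ℝ))) ^ 2 * q / 2 = q / (8 * d ^ 2) := by field_simp; ring
    rw [hα_sq, le_div_iff₀ (by positivity)]
    linarith
  have := sq_mul_div_two_lt_one_sub_one_sub_rpow_mul hα0 hα1 hp1 (by linarith) hq0 hq1
  linarith

theorem key_arithmetic_estimate (d : ℕ) (hd : 0 < d) (p_c p q : ℝ)
    (hpc0 : 0 < p_c) (hpc1 : p_c ≤ 1 / 2)
    (hp1 : 1 / (2 * d) < p) (hp2 : p < p_c)
    (hq0 : 0 ≤ q) (hq1 : q ≤ 1)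
    (hq : q ≥ 8 * d ^ 2 * (p_c - p)) :
    p + (1 - (1 - q) ^ ((1 : ℝ) / (2 * d))) * p * (1 - p) > p_c :=
  key_arithmetic_estimate_general d hd p_c p q hpc1 hp1 hp2 hq1 hq
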